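/- For every rule word w (trivial or not) and every configuration (C,p,d): if the set of positions visited by the forward orbit, {p_t : t ≥ 0} where (C_t,p_t,d_t) = T_w^t(C,p,d), is finite, then the orbit is periodic, i.e. there exists T > 0 with T_w^T(C,p,d) = (C,p,d). -/

import Mathlib

/-- Cells of the grid `ℤ²`. -/
abbrev Cell : Type := ℤ × ℤ

/-- The two letters of a rule word. -/
inductive Letter : Type
  | L | R
deriving DecidableEq

/-- The four unit directions of `ℤ²` (the state set `Q`). -/
inductive Dir : Type
  | E | N | W | S
deriving DecidableEq

/-- Rotation by 90° counterclockwise. -/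
def Dir.left : Dir → Dir
  | .E => .N | .N => .W | .W => .S | .S => .E

/-- Rotation by 90° clockwise. -/
def Dir.right : Dir → Dir
  | .E => .S | .S => .W | .W => .N | .N => .E

/-- The unit vector of a direction. -/
def Dir.vec : Dir → Cell
  | .E => (1, 0) | .N => (0, 1) | .W => (-1, 0) | .S => (0, -1)

/-- Configurations: a picture `ℤ² → ℤ/nℤ`, a position and a direction. -/
abbrev Config (n : ℕ) : Type := (Cell → ZMod n) × Cell × Dir

/-- One step of the generalised ant with rule word `w ∈ {L,R}⁺`:
the symbol under the ant is increased by `1 (mod |w|)`, the ant turns left or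
right according to the letter `w_{C(p)}`, and moves one step in its new direction. -/
def antStepW (w : List Letter) (cfg : Config w.length) : Config w.length :=
  let C := cfg.1
  let p := cfg.2.1
  let d' := if w.getD (C p).val Letter.L = Letter.L then cfg.2.2.left else cfg.2.2.right
  (Function.update C p (C p + 1), p + d'.vec, d')

/-!
The ant map is injective: from the new configuration one reads off the new direction, hence
the old position, the old picture, the letter that was used and so the old direction.
If only finitely many cells are visited, the picture never changes outside that finite set,
so the forward orbit stays in a finite set of configurations; an injective map is periodic on
any point with a finite forward orbit.
-/

open Function Set

theorem Function.Injective.mem_periodicPts_of_forall_iterate_mem {α : Type*} {f : α → α}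
    (hf : Injective f) {x : α} {s : Set α} (hs : s.Finite) (hx : ∀ n, f^[n] x ∈ s) :
    x ∈ periodicPts f := by
  obtain ⟨m, n, hmn, heq⟩ := hs.exists_lt_map_eq_of_forall_mem (f := fun n => f^[n] x) hx
  exact mk_mem_periodicPts (by lia) (iterate_cancel hf heq.symm)

theorem Set.Finite.setOf_eqOn_compl {α β : Type*} [Finite β] {V : Set α} (hV : V.Finite)
    (g : α → β) : {h : α → β | EqOn h g Vᶜ}.Finite := by
  have : Finite V := hV.to_subtype
  refine Finite.of_finite_image (Set.toFinite _) (f := V.domRestrict) fun h₁ hh₁ h₂ hh₂ heq => ?_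
  funext q
  by_cases hq : q ∈ V
  · exact congrFun heq ⟨q, hq⟩
  · rw [hh₁ hq, hh₂ hq]

namespace Dir

instance : Fintype Dir := ⟨{E, N, W, S}, fun d => by cases d <;> simp⟩

theorem left_right (d : Dir) : d.left.right = d := by cases d <;> rfl

theorem right_left (d : Dir) : d.right.left = d := by cases d <;> rfl

theorem left_injective : Injective left := LeftInverse.injective left_right

theorem right_injective : Injective right := LeftInverse.injective right_left

end Dir

theorem antStepW_fst_of_ne (w : List Letter) {c : Config w.length} {q : Cell} (hq : q ≠ c.2.1) :
    (antStepW w c).1 q = c.1 q :=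
  update_of_ne hq _ _

theorem antStepW_iterate_fst_of_forall_ne (w : List Letter) (c : Config w.length) {q : Cell}
    (hq : ∀ s, ((antStepW w)^[s] c).2.1 ≠ q) (t : ℕ) : ((antStepW w)^[t] c).1 q = c.1 q := by
  induction t with
  | zero => rfl
  | succ t ih => rw [iterate_succ_apply', antStepW_fst_of_ne w (hq t).symm, ih]

theorem antStepW_injective (w : List Letter) : Injective (antStepW w) := by
  rintro ⟨C, p, d⟩ ⟨C', p', d'⟩ h
  simp only [antStepW, Prod.mk.injEq] at h
  obtain ⟨hC, hp, hd⟩ := h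
  obtain rfl : p = p' := by rw [hd] at hp; exact add_right_cancel hp
  have hCp : C p = C' p := by simpa using congrFun hC p
  obtain rfl : C = C' := by
    funext q
    by_cases hq : q = p
    · rw [hq, hCp]
    · simpa [update_of_ne hq] using congrFun hC q
  obtain rfl : d = d' := by
    split_ifs at hd
    · exact Dir.left_injective hd
    · exact Dir.right_injective hd
  rfl

/-- For every rule word `w` (trivial or not) and every configuration:
if the set of positions visited by the forward orbit is finite, then the orbit is
periodic. -/
theorem ant_finite_orbit_periodic (w : List Letter) (hw : w ≠ [])
    (cfg : Config w.length)
    (hfin : {q : Cell | ∃ t : ℕ, ((antStepW w)^[t] cfg).2.1 = q}.Finite) :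
    ∃ T : ℕ, 0 < T ∧ (antStepW w)^[T] cfg = cfg := by
  have : NeZero w.length := ⟨by simpa using hw⟩
  set V := {q : Cell | ∃ t : ℕ, ((antStepW w)^[t] cfg).2.1 = q}
  have hbounded : ∀ t, (antStepW w)^[t] cfg ∈ {C | EqOn C cfg.1 Vᶜ} ×ˢ V ×ˢ univ :=
    fun t => ⟨fun q hq => antStepW_iterate_fst_of_forall_ne w cfg (fun s hs => hq ⟨s, hs⟩) t,
      ⟨t, rfl⟩, trivial⟩
  exact mem_periodicPts.1 <| (antStepW_injective w).mem_periodicPts_of_forall_iterate_mem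
    ((hfin.setOf_eqOn_compl cfg.1).prod (hfin.prod finite_univ)) hbounded
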